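/- arXiv:1608.03289 — 3 statements merged into one kernel-verified Lean document; each statement's English description precedes it below -/
import Mathlib

section
/- Let R = [[p,q],[q̄,p̄]] be a positive symplectic transformation on ℂ^m ⊕ ℂ^m (so p = p* > 0, q = qᵀ). If Ker(p - I) = {0}, then q is invertible, u := q|q|^{-1} is unitary, the operator M := (1/√2)[[I, -u],[u*, I]] is unitary, and R = M · diag(p + √(p² - I), p̄ - √(p̄² - I)) · M*. -/
open Matrix
open scoped ComplexOrder

/-- The positive semidefinite square root of a positive semidefinite matrix
(the definition `Matrix.PosSemidef.sqrt` of the older Mathlib, since removed). -/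
noncomputable def Matrix.PosSemidef.sqrt {n 𝕜 : Type*} [RCLike 𝕜] [Fintype n] [DecidableEq n]
    {A : Matrix n n 𝕜} (hA : A.PosSemidef) : Matrix n n 𝕜 :=
  hA.1.eigenvectorUnitary.1 * diagonal ((↑) ∘ (√·) ∘ hA.1.eigenvalues) *
  (star hA.1.eigenvectorUnitary : Matrix n n 𝕜)

/-!
The symplectic condition `R* S R = S` amounts to `q q* = p² - 1` and `q* q = p̄² - 1`. Since
`p ≥ 0` has no eigenvalue `1`, `p² - 1` is invertible, hence so is `q`, and `u = q |q|⁻¹` is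
unitary. By uniqueness of positive square roots (compare squares), conjugation by `u` carries
`p̄` to `p` and `|q|` to `√(q q*) = √(p² - 1)`, while `√(p̄² - 1) = |q|` is the entrywise conjugate
of `√(p² - 1)`. Given these intertwining relations, `M diag(…) M* = R` is a block computation.
-/

namespace Matrix

section Conjugate

variable {n α : Type*} [CommSemiring α] [StarRing α] {A : Matrix n n α}

theorem IsHermitian.map_starRingEnd (hA : A.IsHermitian) :
    A.map (starRingEnd α) = Aᵀ := by
  conv_rhs => rw [← hA.eq]
  rfl

theorem map_starRingEnd_of_transpose_eq (hA : Aᵀ = A) :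
    A.map (starRingEnd α) = Aᴴ := by
  rw [conjTranspose, hA]
  rfl

end Conjugate

section SquareRoot

open scoped MatrixOrder

variable {n 𝕜 : Type*} [RCLike 𝕜] [Fintype n] [DecidableEq n] {A B : Matrix n n 𝕜}

theorem PosSemidef.sqrt_eq_cfcSqrt (hA : A.PosSemidef) : hA.sqrt = CFC.sqrt A := by
  rw [CFC.sqrt_eq_cfc, cfc_nnreal_eq_real _ A hA.nonneg, hA.1.cfc_eq]
  simp only [Matrix.PosSemidef.sqrt, IsHermitian.cfc, Unitary.conjStarAlgAut_apply]
  congr 3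
  funext i
  simp [Real.coe_sqrt, Real.coe_toNNReal', max_eq_left (hA.eigenvalues_nonneg i)]

theorem PosSemidef.posSemidef_sqrt (hA : A.PosSemidef) : hA.sqrt.PosSemidef := by
  rw [hA.sqrt_eq_cfcSqrt]
  exact (CFC.sqrt_nonneg A).posSemidef

theorem PosSemidef.sqrt_mul_self (hA : A.PosSemidef) : hA.sqrt * hA.sqrt = A := by
  rw [hA.sqrt_eq_cfcSqrt]
  exact CFC.sqrt_mul_sqrt_self A hA.nonneg

theorem PosSemidef.sqrt_eq_of_mul_self_eq (hA : A.PosSemidef) (hB : B.PosSemidef)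
    (h : B * B = A) : hA.sqrt = B := by
  rw [hA.sqrt_eq_cfcSqrt, ← h, CFC.sqrt_mul_self B hB.nonneg]

theorem PosSemidef.eq_of_mul_self_eq (hA : A.PosSemidef) (hB : B.PosSemidef)
    (h : A * A = B * B) : A = B := by
  rw [← CFC.sqrt_mul_self A hA.nonneg, h, CFC.sqrt_mul_self B hB.nonneg]

theorem PosSemidef.map_starRingEnd_sqrt (hA : A.PosSemidef) (hB : B.PosSemidef)
    (h : A.map (starRingEnd 𝕜) = B) : hA.sqrt.map (starRingEnd 𝕜) = hB.sqrt := by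
  rw [hA.posSemidef_sqrt.1.map_starRingEnd]
  refine (hB.sqrt_eq_of_mul_self_eq hA.posSemidef_sqrt.transpose ?_).symm
  rw [← transpose_mul, hA.sqrt_mul_self, ← h, hA.1.map_starRingEnd]

theorem PosSemidef.isUnit_mul_self_sub_one (hA : A.PosSemidef)
    (hker : ∀ v : n → 𝕜, (A - 1).mulVec v = 0 → v = 0) : IsUnit (A * A - 1) := by
  have hsub : IsUnit (A - 1) := by
    rw [← mulVec_injective_iff_isUnit]
    intro v w hvw
    rw [← sub_eq_zero]
    exact hker _ (by rw [mulVec_sub, hvw, sub_self])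
  have hadd : IsUnit (A + 1) := (PosDef.posSemidef_add hA PosDef.one).isUnit
  rw [show A * A - 1 = (A - 1) * (A + 1) by noncomm_ring]
  exact hsub.mul hadd

end SquareRoot

section Polar

variable {n 𝕜 : Type*} [RCLike 𝕜] [Fintype n] [DecidableEq n] {q A : Matrix n n 𝕜}

/-- The paper's `|q|`. -/
noncomputable def modulus (q : Matrix n n 𝕜) : Matrix n n 𝕜 :=
  (posSemidef_conjTranspose_mul_self q).sqrt

/-- The unitary factor `u` of the polar decomposition `q = u |q|`. -/
noncomputable def polarUnitary (q : Matrix n n 𝕜) : Matrix n n 𝕜 :=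
  q * (modulus q)⁻¹

theorem posSemidef_modulus (q : Matrix n n 𝕜) : (modulus q).PosSemidef :=
  PosSemidef.posSemidef_sqrt _

theorem modulus_mul_self (q : Matrix n n 𝕜) : modulus q * modulus q = qᴴ * q :=
  PosSemidef.sqrt_mul_self _

theorem isUnit_modulus (hq : IsUnit q) : IsUnit (modulus q) := by
  have h : IsUnit (modulus q * modulus q) := by
    rw [modulus_mul_self]
    exact hq.star.mul hq
  exact isUnit_of_mul_isUnit_left h

theorem polarUnitary_mul_modulus (hq : IsUnit q) : polarUnitary q * modulus q = q := by
  rw [polarUnitary, Matrix.mul_assoc,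
    nonsing_inv_mul _ ((isUnit_iff_isUnit_det _).mp (isUnit_modulus hq)), Matrix.mul_one]

theorem modulus_mul_conjTranspose_polarUnitary (hq : IsUnit q) :
    modulus q * (polarUnitary q)ᴴ = qᴴ := by
  rw [← (posSemidef_modulus q).1.eq, ← conjTranspose_mul, polarUnitary_mul_modulus hq]

theorem polarUnitary_mem_unitary (hq : IsUnit q) : polarUnitary q ∈ unitary (Matrix n n 𝕜) := by
  have hL := isUnit_modulus hq
  have h : star (polarUnitary q) * polarUnitary q = 1 := by
    refine hL.mul_left_cancel (hL.mul_right_cancel ?_)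
    rw [Matrix.mul_one, modulus_mul_self, star_eq_conjTranspose, ← Matrix.mul_assoc,
      modulus_mul_conjTranspose_polarUnitary hq, Matrix.mul_assoc, polarUnitary_mul_modulus hq]
  exact ⟨h, mul_eq_one_comm.mp h⟩

theorem polarUnitary_mul_modulus_mul_conjTranspose (hq : IsUnit q) (hA : A.PosSemidef)
    (h : q * qᴴ = A) : polarUnitary q * modulus q * (polarUnitary q)ᴴ = hA.sqrt := by
  refine (hA.sqrt_eq_of_mul_self_eq ((posSemidef_modulus q).mul_mul_conjTranspose_same _) ?_).symm
  have hu : (polarUnitary q)ᴴ * polarUnitary q = 1 :=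
    Unitary.star_mul_self_of_mem (polarUnitary_mem_unitary hq)
  calc _ = polarUnitary q * modulus q * ((polarUnitary q)ᴴ * polarUnitary q) *
        (modulus q * (polarUnitary q)ᴴ) := by noncomm_ring
    _ = A := by rw [hu, Matrix.mul_one, polarUnitary_mul_modulus hq,
        modulus_mul_conjTranspose_polarUnitary hq, h]

theorem polarUnitary_mul_mul_conjTranspose_eq_of_mul_self_sub_one {P P' : Matrix n n 𝕜}
    (hq : IsUnit q) (hP : P.PosSemidef) (hP' : P'.PosSemidef) (h : q * qᴴ = P * P - 1)
    (h' : qᴴ * q = P' * P' - 1) :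
    polarUnitary q * P' * (polarUnitary q)ᴴ = P := by
  set u := polarUnitary q
  have huu : uᴴ * u = 1 := Unitary.star_mul_self_of_mem (polarUnitary_mem_unitary hq)
  have huu' : u * uᴴ = 1 := Unitary.mul_star_self_of_mem (polarUnitary_mem_unitary hq)
  refine (hP'.mul_mul_conjTranspose_same u).eq_of_mul_self_eq hP ?_
  have hP'P' : P' * P' = modulus q * modulus q + 1 := by rw [modulus_mul_self, h']; abel
  calc u * P' * uᴴ * (u * P' * uᴴ) = u * P' * (uᴴ * u) * P' * uᴴ := by noncomm_ring
    _ = u * modulus q * (modulus q * uᴴ) + u * uᴴ := by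
      rw [huu, Matrix.mul_one, Matrix.mul_assoc u P', hP'P']
      noncomm_ring
    _ = P * P := by
      rw [polarUnitary_mul_modulus hq, modulus_mul_conjTranspose_polarUnitary hq, huu', h,
        sub_add_cancel]

end Polar

theorem conjTranspose_fromBlocks_one_neg {n α : Type*} [DecidableEq n] [CommRing α]
    [StarRing α] (u : Matrix n n α) :
    (fromBlocks 1 (-u) uᴴ 1)ᴴ = fromBlocks 1 u (-uᴴ) 1 := by
  simp [fromBlocks_conjTranspose]

section Rotation

variable {n α : Type*} [Fintype n] [DecidableEq n] [CommRing α] [StarRing α]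
  {u P P' T T' : Matrix n n α}

theorem conjTranspose_fromBlocks_one_neg_mul_self (hu : u ∈ unitary (Matrix n n α)) :
    (fromBlocks 1 (-u) uᴴ 1)ᴴ * fromBlocks 1 (-u) uᴴ 1 = (2 : α) • 1 := by
  have huu : uᴴ * u = 1 := Unitary.star_mul_self_of_mem hu
  have huu' : u * uᴴ = 1 := Unitary.mul_star_self_of_mem hu
  rw [conjTranspose_fromBlocks_one_neg, fromBlocks_multiply, ← fromBlocks_one, fromBlocks_smul]
  simp only [Matrix.one_mul, Matrix.mul_one, Matrix.mul_neg, Matrix.neg_mul, neg_neg, huu, huu',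
    smul_zero, two_smul]
  congr 1 <;> abel

theorem fromBlocks_one_neg_mul_fromBlocks_mul_conjTranspose
    (hu : u ∈ unitary (Matrix n n α)) (hP : u * P' * uᴴ = P) (hT : u * T' * uᴴ = T) :
    fromBlocks 1 (-u) uᴴ 1 * fromBlocks (P + T) 0 0 (P' - T') * (fromBlocks 1 (-u) uᴴ 1)ᴴ =
      (2 : α) • fromBlocks P (u * T') (T' * uᴴ) P' := by
  have huu : uᴴ * u = 1 := Unitary.star_mul_self_of_mem hu
  have hPu : P * u = u * P' := by rw [← hP, Matrix.mul_assoc, huu, Matrix.mul_one]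
  have hTu : T * u = u * T' := by rw [← hT, Matrix.mul_assoc, huu, Matrix.mul_one]
  have huP : uᴴ * P = P' * uᴴ := by rw [← hP, ← Matrix.mul_assoc, ← Matrix.mul_assoc, huu,
    Matrix.one_mul]
  have huT : uᴴ * T = T' * uᴴ := by rw [← hT, ← Matrix.mul_assoc, ← Matrix.mul_assoc, huu,
    Matrix.one_mul]
  rw [conjTranspose_fromBlocks_one_neg, fromBlocks_multiply, fromBlocks_multiply, fromBlocks_smul]
  congr 1 <;> simp only [two_smul]
  · linear_combination (norm := noncomm_ring) hP - hT
  · linear_combination (norm := noncomm_ring) hPu + hTu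
  · linear_combination (norm := noncomm_ring) huP + huT
  · linear_combination (norm := noncomm_ring) huP * u + huT * u + P' * huu + T' * huu

end Rotation

theorem inv_sqrt_two_smul_conjTranspose_mul_self {m n : Type*} [Fintype m]
    (A : Matrix m n ℂ) :
    (((Real.sqrt 2 : ℂ))⁻¹ • A)ᴴ * (((Real.sqrt 2 : ℂ))⁻¹ • A) = (2 : ℂ)⁻¹ • (Aᴴ * A) := by
  rw [conjTranspose_smul, Matrix.smul_mul, Matrix.mul_smul, smul_smul]
  simp [← mul_inv, ← Complex.ofReal_mul]

theorem inv_sqrt_two_smul_mul_mul_conjTranspose {m n : Type*} [Fintype m] [Fintype n]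
    (A : Matrix m n ℂ) (B : Matrix n n ℂ) :
    (((Real.sqrt 2 : ℂ))⁻¹ • A) * B * (((Real.sqrt 2 : ℂ))⁻¹ • A)ᴴ =
      (2 : ℂ)⁻¹ • (A * B * Aᴴ) := by
  rw [conjTranspose_smul, Matrix.smul_mul, Matrix.mul_smul, Matrix.smul_mul, smul_smul]
  simp [← mul_inv, ← Complex.ofReal_mul]

theorem symplectic_fromBlocks_relations {n α : Type*} [Fintype n] [DecidableEq n]
    [CommRing α] [StarRing α] {p q : Matrix n n α} (hp : p.IsHermitian)
    (h : (fromBlocks p q qᴴ pᵀ)ᴴ * fromBlocks 1 0 0 (-1) * fromBlocks p q qᴴ pᵀ =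
      fromBlocks 1 0 0 (-1)) :
    q * qᴴ = p * p - 1 ∧ qᴴ * q = pᵀ * pᵀ - 1 := by
  rw [fromBlocks_conjTranspose, fromBlocks_multiply, fromBlocks_multiply] at h
  simp only [Matrix.mul_zero, Matrix.mul_one, Matrix.mul_neg, add_zero, zero_add,
    conjTranspose_conjTranspose, hp.eq, hp.transpose.eq] at h
  obtain ⟨h₁₁, -, -, h₂₂⟩ := fromBlocks_inj.mp h
  constructor
  · linear_combination (norm := noncomm_ring) -h₁₁
  · linear_combination (norm := noncomm_ring) h₂₂

end Matrix

/-- Let `R = [[p,q],[q̄,p̄]]` be a positive symplectic transformation on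
`ℂ^m ⊕ ℂ^m` (so `p = p* > 0`, `q = qᵀ`).  If `Ker (p - 1) = {0}`, then `q` is invertible,
`u := q * |q|⁻¹` is unitary, the operator `M := (1/√2)·[[1, -u],[u*, 1]]` is unitary, and
`R = M * diag(p + √(p² - 1), p̄ - √(p̄² - 1)) * Mᴴ`. -/
theorem positive_symplectic_diagonalization {m : ℕ}
    (p q : Matrix (Fin m) (Fin m) ℂ)
    (S R : Matrix (Fin m ⊕ Fin m) (Fin m ⊕ Fin m) ℂ)
    (hS : S = Matrix.fromBlocks 1 0 0 (-1))
    (hR : R = Matrix.fromBlocks p q (q.map (starRingEnd ℂ)) (p.map (starRingEnd ℂ)))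
    (hsymp : Rᴴ * S * R = S)
    (hp : p.PosDef) (hq : qᵀ = q)
    (hker : ∀ v : Fin m → ℂ, (p - 1).mulVec v = 0 → v = 0) :
    IsUnit q ∧
    (q * ((Matrix.posSemidef_conjTranspose_mul_self q).sqrt)⁻¹)ᴴ *
      (q * ((Matrix.posSemidef_conjTranspose_mul_self q).sqrt)⁻¹) = 1 ∧
    (q * ((Matrix.posSemidef_conjTranspose_mul_self q).sqrt)⁻¹) *
      (q * ((Matrix.posSemidef_conjTranspose_mul_self q).sqrt)⁻¹)ᴴ = 1 ∧
    (((Real.sqrt 2 : ℂ))⁻¹ •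
        Matrix.fromBlocks 1 (-(q * ((Matrix.posSemidef_conjTranspose_mul_self q).sqrt)⁻¹))
          (q * ((Matrix.posSemidef_conjTranspose_mul_self q).sqrt)⁻¹)ᴴ 1)ᴴ *
      (((Real.sqrt 2 : ℂ))⁻¹ •
        Matrix.fromBlocks 1 (-(q * ((Matrix.posSemidef_conjTranspose_mul_self q).sqrt)⁻¹))
          (q * ((Matrix.posSemidef_conjTranspose_mul_self q).sqrt)⁻¹)ᴴ 1) = 1 ∧
    ∃ hs : (p * p - 1).PosSemidef,
      R = (((Real.sqrt 2 : ℂ))⁻¹ •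
            Matrix.fromBlocks 1 (-(q * ((Matrix.posSemidef_conjTranspose_mul_self q).sqrt)⁻¹))
              (q * ((Matrix.posSemidef_conjTranspose_mul_self q).sqrt)⁻¹)ᴴ 1) *
          Matrix.fromBlocks (p + hs.sqrt) 0 0
            (p.map (starRingEnd ℂ) - hs.sqrt.map (starRingEnd ℂ)) *
          (((Real.sqrt 2 : ℂ))⁻¹ •
            Matrix.fromBlocks 1 (-(q * ((Matrix.posSemidef_conjTranspose_mul_self q).sqrt)⁻¹))
              (q * ((Matrix.posSemidef_conjTranspose_mul_self q).sqrt)⁻¹)ᴴ 1)ᴴ := by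
  simp only [← modulus.eq_1, ← polarUnitary.eq_1]
  rw [hp.1.map_starRingEnd, map_starRingEnd_of_transpose_eq hq] at hR
  subst hS hR
  obtain ⟨hqq, hqq'⟩ := symplectic_fromBlocks_relations hp.1 hsymp
  have hs : (p * p - 1).PosSemidef := hqq ▸ posSemidef_self_mul_conjTranspose q
  have hq_unit : IsUnit q :=
    isUnit_of_mul_isUnit_left (hqq ▸ hp.posSemidef.isUnit_mul_self_sub_one hker)
  have hu := polarUnitary_mem_unitary hq_unit
  have hpu := polarUnitary_mul_mul_conjTranspose_eq_of_mul_self_sub_one hq_unit hp.posSemidef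
    hp.posSemidef.transpose hqq hqq'
  have htu := polarUnitary_mul_modulus_mul_conjTranspose hq_unit hs hqq
  have hconj : hs.sqrt.map (starRingEnd ℂ) = modulus q :=
    hs.map_starRingEnd_sqrt _ (by rw [hs.1.map_starRingEnd, transpose_sub, transpose_mul,
      transpose_one, hqq'])
  refine ⟨hq_unit, Unitary.star_mul_self_of_mem hu, Unitary.mul_star_self_of_mem hu, ?_, hs, ?_⟩
  · rw [inv_sqrt_two_smul_conjTranspose_mul_self, conjTranspose_fromBlocks_one_neg_mul_self hu,
      smul_smul]
    norm_num
  · rw [hconj, hp.1.map_starRingEnd, inv_sqrt_two_smul_mul_mul_conjTranspose,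
      fromBlocks_one_neg_mul_fromBlocks_mul_conjTranspose hu hpu htu,
      polarUnitary_mul_modulus hq_unit, modulus_mul_conjTranspose_polarUnitary hq_unit, smul_smul]
    norm_num
end

section
/- Let h be an m×m Hermitian matrix, g an m×m symmetric matrix, and set A = [[h,g],[ḡ,h̄]], B = AS with S = diag(I,-I). If A > 0 (positive definite), then B has only real nonzero eigenvalues. -/
open Matrix
open scoped ComplexOrder

namespace Matrix

variable {n 𝕜 : Type*} [Fintype n]

theorem exists_mulVec_eq_smul_of_mem_spectrum [DecidableEq n] {K : Type*} [Field K]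
    {M : Matrix n n K} {μ : K} (hμ : μ ∈ spectrum K M) : ∃ v ≠ 0, M *ᵥ v = μ • v := by
  rw [← spectrum_toLin', ← Module.End.hasEigenvalue_iff_mem_spectrum] at hμ
  obtain ⟨v, hv⟩ := hμ.exists_hasEigenvector
  exact ⟨v, hv.2, Module.End.mem_eigenspace_iff.mp hv.1⟩

variable [RCLike 𝕜] {A S : Matrix n n 𝕜} {v : n → 𝕜} {μ : 𝕜}

/-- Pairing `A S v = μ v` with `S v` gives `(S v)ᴴ A (S v) = μ · vᴴ S v`, a positive number
written as `μ` times a real one. -/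
theorem PosDef.im_eq_zero_and_ne_zero_of_mul_mulVec_eq_smul (hA : A.PosDef)
    (hS : S.IsHermitian) (hSv : S *ᵥ v ≠ 0) (hμ : (A * S) *ᵥ v = μ • v) :
    RCLike.im μ = 0 ∧ μ ≠ 0 := by
  have hpair : star (S *ᵥ v) ⬝ᵥ A *ᵥ (S *ᵥ v) = μ * (star v ⬝ᵥ S *ᵥ v) := by
    rw [mulVec_mulVec, hμ, dotProduct_smul, smul_eq_mul, star_mulVec, hS.eq,
      ← dotProduct_mulVec]
  have hpos := hA.dotProduct_mulVec_pos hSv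
  rw [hpair, RCLike.pos_iff, RCLike.mul_re, RCLike.mul_im,
    hS.im_star_dotProduct_mulVec_self] at hpos
  obtain ⟨hre, him⟩ := hpos
  simp only [mul_zero, sub_zero, zero_add] at hre him
  refine ⟨(mul_eq_zero.mp him).resolve_right (right_ne_zero_of_mul hre.ne'), ?_⟩
  rintro rfl
  simp at hre

theorem PosDef.im_eq_zero_and_ne_zero_of_mem_spectrum_mul [DecidableEq n] (hA : A.PosDef)
    (hS : S.IsHermitian) (hSu : IsUnit S) (hμ : μ ∈ spectrum 𝕜 (A * S)) :
    RCLike.im μ = 0 ∧ μ ≠ 0 := by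
  obtain ⟨v, hv, hASv⟩ := exists_mulVec_eq_smul_of_mem_spectrum hμ
  have hSv : S *ᵥ v ≠ 0 := fun h0 ↦
    hv (mulVec_injective_iff_isUnit.mpr hSu (h0.trans (mulVec_zero S).symm))
  exact hA.im_eq_zero_and_ne_zero_of_mul_mulVec_eq_smul hS hSv hASv

end Matrix

theorem symplectic_generator_real_nonzero_spectrum_general {m : ℕ}
    (h g : Matrix (Fin m) (Fin m) ℂ)
    (hA : (Matrix.fromBlocks h g (g.map (starRingEnd ℂ)) (h.map (starRingEnd ℂ))).PosDef) :
    ∀ μ ∈ spectrum ℂ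
        (Matrix.fromBlocks h g (g.map (starRingEnd ℂ)) (h.map (starRingEnd ℂ)) *
          Matrix.fromBlocks 1 0 0 (-1)),
      μ.im = 0 ∧ μ ≠ 0 := by
  set S : Matrix (Fin m ⊕ Fin m) (Fin m ⊕ Fin m) ℂ := fromBlocks 1 0 0 (-1)
  have hS : S.IsHermitian := by simp [S, IsHermitian, fromBlocks_conjTranspose]
  have hSS : S * S = 1 := by simp [S, fromBlocks_multiply, ← fromBlocks_one]
  exact fun μ ↦ hA.im_eq_zero_and_ne_zero_of_mem_spectrum_mul hS ⟨⟨S, S, hSS, hSS⟩, rfl⟩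

/-- Let `h` be an `m×m` Hermitian matrix, `g` an `m×m` symmetric matrix,
and set `A = [[h,g],[ḡ,h̄]]`, `B = A*S` with `S = diag(1,-1)`.  If `A > 0`
(positive definite), then `B` has only real nonzero eigenvalues. -/
theorem symplectic_generator_real_nonzero_spectrum {m : ℕ}
    (h g : Matrix (Fin m) (Fin m) ℂ)
    (hh : hᴴ = h) (hg : gᵀ = g)
    (hA : (Matrix.fromBlocks h g (g.map (starRingEnd ℂ)) (h.map (starRingEnd ℂ))).PosDef) :
    ∀ μ ∈ spectrum ℂ
        (Matrix.fromBlocks h g (g.map (starRingEnd ℂ)) (h.map (starRingEnd ℂ)) *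
          Matrix.fromBlocks 1 0 0 (-1)),
      μ.im = 0 ∧ μ ≠ 0 :=
  symplectic_generator_real_nonzero_spectrum_general h g hA
end

section
/- Let A = [[h,g],[ḡ,h̄]] > 0 on ℂ^m ⊕ ℂ^m and B = AS with S = diag(I,-I). Define sgn(B) by holomorphic functional calculus (B has only real nonzero eigenvalues). Then a symplectic transformation R diagonalizes B (i.e. R^{-1}BR = diag(h_d, -h̄_d) with h_d > 0) if and only if sgn(B) = R S R^{-1}. -/
/-!
Both sides say that `R S R⁻¹` is the sign of `B`.  If `R⁻¹ B R = diag(h_d, -h̄_d)`, then `S` is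
the sign of this block matrix, and a sign is unique: for two candidates `P`, `Q`, the matrices
`P B` and `Q B` are square roots of `B²` with spectrum in `(0, ∞)`, and two such square roots `C`,
`D` coincide because `X = C - D` solves the Sylvester equation `C X = X (-D)` in which `C` and `-D`
have disjoint spectra.  Conversely, if `sgn B = R S R⁻¹` then `S` commutes with `D = R⁻¹ B R`, so
`D` is block diagonal; symplecticity makes `D S = (S R S)ᴴ A (S R S)` positive definite, and the
`J`-reality of `A` and `R` gives `J D̄ J = -D`, which forces the lower block to be `-h̄_d`.
-/

open Matrix
open scoped ComplexOrder

theorem SemiconjBy.aeval {R A : Type*} [CommSemiring R] [Semiring A] [Algebra R A] {a b x : A}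
    (h : SemiconjBy x a b) (p : Polynomial R) :
    SemiconjBy x (Polynomial.aeval a p) (Polynomial.aeval b p) := by
  induction p using Polynomial.induction_on' with
  | add p q hp hq => simpa only [map_add] using hp.add_right hq
  | monomial k r =>
    simp only [Polynomial.aeval_monomial]
    exact SemiconjBy.mul_right (Algebra.commute_algebraMap_right r x) (h.pow_right k)

namespace Matrix

theorem PosDef.map_starRingEnd {𝕜 n : Type*} [RCLike 𝕜] [Fintype n] {A : Matrix n n 𝕜}
    (hA : A.PosDef) : (A.map (starRingEnd 𝕜)).PosDef := by
  have hconj : A.map (starRingEnd 𝕜) = Aᴴᵀ := rfl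
  rw [hconj, hA.isHermitian.eq]
  exact hA.transpose

variable {n : Type*} [Fintype n] [DecidableEq n]

theorem eq_zero_of_mul_eq_mul_of_disjoint_spectrum {K : Type*} [Field K] [IsAlgClosed K]
    {C E X : Matrix n n K} (hCE : Disjoint (spectrum K C) (spectrum K E)) (h : C * X = X * E) :
    X = 0 := by
  cases isEmpty_or_nonempty n
  · exact Subsingleton.elim _ _
  have hpX : Polynomial.aeval C E.charpoly * X = 0 := by
    rw [← (SemiconjBy.aeval h.symm E.charpoly).eq, aeval_self_charpoly, mul_zero]
  have hdeg : 0 < E.charpoly.degree := by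
    rw [charpoly_degree_eq_dim]
    exact_mod_cast Fintype.card_pos
  have hunit : IsUnit (Polynomial.aeval C E.charpoly) := by
    rw [← spectrum.zero_notMem_iff K, spectrum.map_polynomial_aeval_of_degree_pos C _ hdeg]
    rintro ⟨μ, hμC, hμE⟩
    exact hCE.notMem_of_mem_left hμC (mem_spectrum_iff_isRoot_charpoly.2 hμE)
  exact hunit.mul_right_eq_zero.1 hpX

theorem eq_of_mul_self_eq_of_spectrum_pos {C D : Matrix n n ℂ}
    (hC : ∀ μ ∈ spectrum ℂ C, 0 < μ) (hD : ∀ μ ∈ spectrum ℂ D, 0 < μ) (h : C * C = D * D) :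
    C = D := by
  have hdisj : Disjoint (spectrum ℂ C) (spectrum ℂ (-D)) := by
    refine Set.disjoint_left.2 fun μ hμC hμD => ?_
    rw [← spectrum.neg_eq, Set.mem_neg] at hμD
    exact lt_asymm (hC μ hμC) (neg_pos.1 (hD _ hμD))
  have hsylv : C * (C - D) = (C - D) * -D := by
    rw [mul_sub, sub_mul, h]; noncomm_ring
  exact sub_eq_zero.1 (eq_zero_of_mul_eq_mul_of_disjoint_spectrum hdisj hsylv)

theorem PosDef.spectrum_pos {𝕜 : Type*} [RCLike 𝕜] {A : Matrix n n 𝕜} (hA : A.PosDef) :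
    ∀ μ ∈ spectrum 𝕜 A, 0 < μ := fun _ hμ =>
  lt_of_le_of_ne ((posSemidef_iff_isHermitian_and_spectrum_nonneg.1 hA.posSemidef).2 hμ)
    fun h0 => (spectrum.zero_notMem_iff 𝕜).2 hA.isUnit (h0 ▸ hμ)

theorem PosDef.fromBlocks_zero {𝕜 : Type*} [RCLike 𝕜] {l : Type*} [Fintype l] [DecidableEq l]
    {a : Matrix l l 𝕜} {d : Matrix n n 𝕜} (ha : a.PosDef) (hd : d.PosDef) :
    (fromBlocks a 0 0 d).PosDef := by
  have : Invertible a := ha.isUnit.invertible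
  have hsemi : (fromBlocks a 0 0 d).PosSemidef := by
    simpa using (PosDef.fromBlocks₁₁ 0 d ha).2 (by simpa using hd.posSemidef)
  rw [hsemi.posDef_iff_isUnit, isUnit_iff_isUnit_det, det_fromBlocks_zero₂₁]
  exact ((isUnit_iff_isUnit_det a).1 ha.isUnit).mul ((isUnit_iff_isUnit_det d).1 hd.isUnit)

/-- `P = sgn B`, in the characterization of the statement. -/
structure IsSignOf (P B : Matrix n n ℂ) : Prop where
  commute : P * B = B * P
  mul_self : P * P = 1
  spectrum_pos : ∀ μ ∈ spectrum ℂ (P * B), 0 < μ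

namespace IsSignOf

variable {P Q B : Matrix n n ℂ}

theorem mul_mul_self (hP : IsSignOf P B) : P * B * (P * B) = B * B := by
  rw [mul_assoc, ← mul_assoc B, ← hP.commute, ← mul_assoc, ← mul_assoc, hP.mul_self, one_mul]

theorem isUnit (hP : IsSignOf P B) : IsUnit B := by
  have hPB : IsUnit (P * B) :=
    (spectrum.zero_notMem_iff ℂ).1 fun h0 => (hP.spectrum_pos 0 h0).ne rfl
  have hB : B = P * (P * B) := by rw [← mul_assoc, hP.mul_self, one_mul]
  exact hB ▸ (IsUnit.of_mul_eq_one_right P hP.mul_self).mul hPB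

theorem unique (hP : IsSignOf P B) (hQ : IsSignOf Q B) : P = Q :=
  hP.isUnit.mul_left_inj.1 <| eq_of_mul_self_eq_of_spectrum_pos hP.spectrum_pos hQ.spectrum_pos <|
    hP.mul_mul_self.trans hQ.mul_mul_self.symm

theorem conj (hP : IsSignOf P B) {R : Matrix n n ℂ} (hR : IsUnit R) :
    IsSignOf (R * P * R⁻¹) (R * B * R⁻¹) := by
  have hRR : R⁻¹ * R = 1 := nonsing_inv_mul R ((isUnit_iff_isUnit_det R).1 hR)
  have hconj : ∀ X Y : Matrix n n ℂ, R * X * R⁻¹ * (R * Y * R⁻¹) = R * (X * Y) * R⁻¹ := by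
    intro X Y
    simp only [mul_assoc, ← mul_assoc R⁻¹ R, hRR, one_mul]
  refine ⟨by rw [hconj, hconj, hP.commute], ?_, ?_⟩
  · rw [hconj, hP.mul_self, mul_one, mul_nonsing_inv R ((isUnit_iff_isUnit_det R).1 hR)]
  · lift R to (Matrix n n ℂ)ˣ using hR
    rw [hconj, ← coe_units_inv, spectrum.units_conjugate]
    exact hP.spectrum_pos

end IsSignOf

section SwapConj

variable {α : Type*} [CommRing α] [StarRing α]

/-- `M ↦ J M̄ J` with `J = [[0, 1], [1, 0]]`; its fixed points are the `J`-real matrices. -/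
def swapConj : Matrix (n ⊕ n) (n ⊕ n) α ≃+* Matrix (n ⊕ n) (n ⊕ n) α :=
  (starRingAut (R := α)).mapMatrix.trans (reindexRingEquiv α (Equiv.sumComm n n))

theorem swapConj_fromBlocks (a b c d : Matrix n n α) :
    swapConj (fromBlocks a b c d) =
      fromBlocks (d.map (starRingEnd α)) (c.map (starRingEnd α)) (b.map (starRingEnd α))
        (a.map (starRingEnd α)) := by
  ext (i | i) (j | j) <;> rfl

theorem swapConj_fromBlocks_map (a b : Matrix n n α) :
    swapConj (fromBlocks a b (b.map (starRingEnd α)) (a.map (starRingEnd α))) =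
      fromBlocks a b (b.map (starRingEnd α)) (a.map (starRingEnd α)) := by
  rw [swapConj_fromBlocks]
  simp [Matrix.map_map, Function.comp_def]

theorem swapConj_fromBlocks_one_neg_one :
    swapConj (fromBlocks 1 0 0 (-1) : Matrix (n ⊕ n) (n ⊕ n) α) = -fromBlocks 1 0 0 (-1) := by
  rw [swapConj_fromBlocks, fromBlocks_neg]
  simp [Matrix.map_neg _ (map_neg (starRingEnd α))]

end SwapConj

theorem eq_fromBlocks_of_commute_fromBlocks_one_neg_one {α : Type*} [Ring α] [IsAddTorsionFree α]
    {l : Type*} [Fintype l] [DecidableEq l] {M : Matrix (l ⊕ n) (l ⊕ n) α}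
    (h : fromBlocks 1 0 0 (-1) * M = M * fromBlocks 1 0 0 (-1)) :
    M = fromBlocks M.toBlocks₁₁ 0 0 M.toBlocks₂₂ := by
  rw [← fromBlocks_toBlocks M, fromBlocks_multiply, fromBlocks_multiply, fromBlocks_inj] at h
  have h₁₂ : M.toBlocks₁₂ = 0 :=
    (self_eq_neg (G := l → n → α)).1 (by simpa using h.2.1 : M.toBlocks₁₂ = -M.toBlocks₁₂)
  have h₂₁ : M.toBlocks₂₁ = 0 :=
    (neg_eq_self (G := n → l → α)).1 (by simpa using h.2.2.1 : -M.toBlocks₂₁ = M.toBlocks₂₁)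
  conv_lhs => rw [← fromBlocks_toBlocks M, h₁₂, h₂₁]

section Symplectic

variable {ι : Type*} [Fintype ι] [DecidableEq ι]

theorem inv_eq_of_conjTranspose_mul_mul_eq {α : Type*} [CommRing α] [StarRing α]
    {S R : Matrix ι ι α} (hS : S * S = 1) (hR : Rᴴ * S * R = S) : R⁻¹ = S * Rᴴ * S :=
  inv_eq_left_inv <| by rw [mul_assoc, mul_assoc, ← mul_assoc Rᴴ, hR, hS]

theorem isUnit_of_conjTranspose_mul_mul_eq {α : Type*} [CommRing α] [StarRing α]
    {S R : Matrix ι ι α} (hS : S * S = 1) (hR : Rᴴ * S * R = S) : IsUnit R :=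
  IsUnit.of_mul_eq_one_right (S * Rᴴ * S) <| by
    rw [mul_assoc, mul_assoc, ← mul_assoc Rᴴ, hR, hS]

/-- Since `R⁻¹ = S Rᴴ S`, this matrix is the congruence `(S R S)ᴴ A (S R S)`. -/
theorem PosDef.inv_mul_mul_mul_of_conjTranspose_mul_mul_eq {𝕜 : Type*} [RCLike 𝕜]
    {S R A : Matrix ι ι 𝕜} (hS : S * S = 1) (hSH : Sᴴ = S) (hR : Rᴴ * S * R = S)
    (hA : A.PosDef) : (R⁻¹ * (A * S) * R * S).PosDef := by
  have hunit : IsUnit (S * R * S) :=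
    ((IsUnit.of_mul_eq_one_right S hS).mul (isUnit_of_conjTranspose_mul_mul_eq hS hR)).mul
      (IsUnit.of_mul_eq_one_right S hS)
  have hcongr : R⁻¹ * (A * S) * R * S = star (S * R * S) * A * (S * R * S) := by
    rw [inv_eq_of_conjTranspose_mul_mul_eq hS hR, star_eq_conjTranspose]
    simp only [conjTranspose_mul, hSH, mul_assoc]
  rw [hcongr]
  exact hunit.posDef_star_left_conjugate_iff.2 hA

end Symplectic

theorem fromBlocks_one_neg_one_mul_self {α : Type*} [Ring α] {l : Type*} [Fintype l]
    [DecidableEq l] :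
    (fromBlocks 1 0 0 (-1) : Matrix (l ⊕ n) (l ⊕ n) α) * fromBlocks 1 0 0 (-1) = 1 := by
  simp [fromBlocks_multiply]

theorem isSignOf_fromBlocks_one_neg_one {a d : Matrix n n ℂ} (ha : a.PosDef) (hd : d.PosDef) :
    IsSignOf (fromBlocks 1 0 0 (-1)) (fromBlocks a 0 0 (-d)) := by
  have hSD : fromBlocks 1 0 0 (-1) * fromBlocks a 0 0 (-d) = fromBlocks a 0 0 d := by
    simp [fromBlocks_multiply]
  refine ⟨?_, ?_, ?_⟩
  · rw [hSD]
    simp [fromBlocks_multiply]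
  · exact fromBlocks_one_neg_one_mul_self
  · rw [hSD]
    exact (ha.fromBlocks_zero hd).spectrum_pos

def Diagonalizes (R B : Matrix (n ⊕ n) (n ⊕ n) ℂ) : Prop :=
  ∃ hd : Matrix n n ℂ, hd.PosDef ∧ R⁻¹ * B * R = fromBlocks hd 0 0 (-(hd.map (starRingEnd ℂ)))

theorem Diagonalizes.isSignOf {R B : Matrix (n ⊕ n) (n ⊕ n) ℂ} (h : Diagonalizes R B)
    (hR : IsUnit R) : IsSignOf (R * fromBlocks 1 0 0 (-1) * R⁻¹) B := by
  obtain ⟨hd, hpos, hdiag⟩ := h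
  have hdet : IsUnit R.det := (isUnit_iff_isUnit_det R).1 hR
  have hB : B = R * fromBlocks hd 0 0 (-(hd.map (starRingEnd ℂ))) * R⁻¹ := by
    rw [← hdiag]
    simp only [mul_assoc, mul_nonsing_inv _ hdet, mul_one, mul_nonsing_inv_cancel_left _ _ hdet]
  rw [hB]
  exact (isSignOf_fromBlocks_one_neg_one hpos hpos.map_starRingEnd).conj hR

theorem exists_eq_fromBlocks_of_swapConj_eq_neg {D : Matrix (n ⊕ n) (n ⊕ n) ℂ}
    (hSD : fromBlocks 1 0 0 (-1) * D = D * fromBlocks 1 0 0 (-1))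
    (hpos : (D * fromBlocks 1 0 0 (-1)).PosDef) (hconj : swapConj D = -D) :
    ∃ hd : Matrix n n ℂ, hd.PosDef ∧ D = fromBlocks hd 0 0 (-(hd.map (starRingEnd ℂ))) := by
  rw [eq_fromBlocks_of_commute_fromBlocks_one_neg_one hSD] at hpos hconj ⊢
  set a := D.toBlocks₁₁
  set d := D.toBlocks₂₂
  have hDS : fromBlocks a 0 0 d * fromBlocks 1 0 0 (-1) = fromBlocks a 0 0 (-d) := by
    simp [fromBlocks_multiply]
  have ha : a.PosDef := by
    rw [hDS] at hpos
    exact hpos.submatrix Sum.inl_injective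
  rw [swapConj_fromBlocks, fromBlocks_neg, fromBlocks_inj] at hconj
  refine ⟨a, ha, ?_⟩
  rw [hconj.2.2.2, neg_neg]

theorem diagonalizes_of_commute {A R : Matrix (n ⊕ n) (n ⊕ n) ℂ} (hA : A.PosDef)
    (hAJ : swapConj A = A) (hRJ : swapConj R = R)
    (hR : Rᴴ * fromBlocks 1 0 0 (-1) * R = fromBlocks 1 0 0 (-1))
    (hcomm : R * fromBlocks 1 0 0 (-1) * R⁻¹ * (A * fromBlocks 1 0 0 (-1)) =
      A * fromBlocks 1 0 0 (-1) * (R * fromBlocks 1 0 0 (-1) * R⁻¹)) :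
    Diagonalizes R (A * fromBlocks 1 0 0 (-1)) := by
  set S : Matrix (n ⊕ n) (n ⊕ n) ℂ := fromBlocks 1 0 0 (-1) with hS
  have hS2 : S * S = 1 := fromBlocks_one_neg_one_mul_self
  have hSH : Sᴴ = S := by simp [hS, fromBlocks_conjTranspose]
  have hdet : IsUnit R.det :=
    (isUnit_iff_isUnit_det R).1 (isUnit_of_conjTranspose_mul_mul_eq hS2 hR)
  have hRinvJ : swapConj R⁻¹ = R⁻¹ :=
    (inv_eq_left_inv (by rw [← map_one swapConj, ← nonsing_inv_mul R hdet, map_mul, hRJ])).symm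
  refine exists_eq_fromBlocks_of_swapConj_eq_neg ?_
    (PosDef.inv_mul_mul_mul_of_conjTranspose_mul_mul_eq hS2 hSH hR hA) ?_
  · calc S * (R⁻¹ * (A * S) * R)
        = R⁻¹ * (R * S * R⁻¹ * (A * S)) * R := by
          simp only [mul_assoc, nonsing_inv_mul_cancel_left _ _ hdet]
      _ = R⁻¹ * (A * S * (R * S * R⁻¹)) * R := by rw [hcomm]
      _ = R⁻¹ * (A * S) * R * S := by
          simp only [mul_assoc, nonsing_inv_mul _ hdet, mul_one]
  · simp only [map_mul, hRinvJ, hAJ, hRJ, hS, swapConj_fromBlocks_one_neg_one, mul_neg, neg_mul]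

end Matrix

theorem diagonalizes_iff_sgn_eq_general {m : ℕ}
    (h g : Matrix (Fin m) (Fin m) ℂ)
    (S A B sgnB : Matrix (Fin m ⊕ Fin m) (Fin m ⊕ Fin m) ℂ)
    (hS : S = Matrix.fromBlocks 1 0 0 (-1))
    (hA : A = Matrix.fromBlocks h g (g.map (starRingEnd ℂ)) (h.map (starRingEnd ℂ)))
    (hApos : A.PosDef)
    (hB : B = A * S)
    -- characterization of `sgn(B)` via holomorphic functional calculus:
    (hsgn_comm : sgnB * B = B * sgnB)
    (hsgn_sq : sgnB * sgnB = 1)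
    (hsgn_pos : ∀ μ ∈ spectrum ℂ (sgnB * B), ∃ r : ℝ, 0 < r ∧ μ = (r : ℂ))
    (rp rq : Matrix (Fin m) (Fin m) ℂ)
    (R : Matrix (Fin m ⊕ Fin m) (Fin m ⊕ Fin m) ℂ)
    (hRJreal : R = Matrix.fromBlocks rp rq (rq.map (starRingEnd ℂ)) (rp.map (starRingEnd ℂ)))
    (hRsymp : Rᴴ * S * R = S) :
    (∃ hd : Matrix (Fin m) (Fin m) ℂ, hd.PosDef ∧
        R⁻¹ * B * R = Matrix.fromBlocks hd 0 0 (-(hd.map (starRingEnd ℂ)))) ↔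
      sgnB = R * S * R⁻¹ := by
  subst hS hB
  have hsgn : IsSignOf sgnB (A * fromBlocks 1 0 0 (-1)) := by
    refine ⟨hsgn_comm, hsgn_sq, fun μ hμ => ?_⟩
    obtain ⟨r, hr, rfl⟩ := hsgn_pos μ hμ
    exact_mod_cast hr
  have hR : IsUnit R := isUnit_of_conjTranspose_mul_mul_eq fromBlocks_one_neg_one_mul_self hRsymp
  constructor
  · exact fun hdiag => hsgn.unique (Diagonalizes.isSignOf hdiag hR)
  · rintro rfl
    refine diagonalizes_of_commute hApos ?_ ?_ hRsymp hsgn_comm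
    · rw [hA, swapConj_fromBlocks_map]
    · rw [hRJreal, swapConj_fromBlocks_map]

/-- Let `A = [[h,g],[ḡ,h̄]] > 0` on `ℂ^m ⊕ ℂ^m` and `B = A*S` with
`S = diag(1,-1)`.  Define `sgn(B)` by holomorphic functional calculus (here characterized
uniquely as the matrix `sgnB` commuting with `B`, with `sgnB² = 1` and `sgnB * B` having
positive spectrum; `B` has only real nonzero eigenvalues).  Then a symplectic
transformation `R` (i.e. `J`-real with `Rᴴ S R = S`) diagonalizes `B`
(i.e. `R⁻¹ B R = diag(h_d, -h̄_d)` with `h_d > 0`) if and only if `sgn(B) = R S R⁻¹`. -/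
theorem diagonalizes_iff_sgn_eq {m : ℕ}
    (h g : Matrix (Fin m) (Fin m) ℂ)
    (hh : hᴴ = h) (hg : gᵀ = g)
    (S A B sgnB : Matrix (Fin m ⊕ Fin m) (Fin m ⊕ Fin m) ℂ)
    (hS : S = Matrix.fromBlocks 1 0 0 (-1))
    (hA : A = Matrix.fromBlocks h g (g.map (starRingEnd ℂ)) (h.map (starRingEnd ℂ)))
    (hApos : A.PosDef)
    (hB : B = A * S)
    -- characterization of `sgn(B)` via holomorphic functional calculus:
    (hsgn_comm : sgnB * B = B * sgnB)
    (hsgn_sq : sgnB * sgnB = 1)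
    (hsgn_pos : ∀ μ ∈ spectrum ℂ (sgnB * B), ∃ r : ℝ, 0 < r ∧ μ = (r : ℂ))
    (rp rq : Matrix (Fin m) (Fin m) ℂ)
    (R : Matrix (Fin m ⊕ Fin m) (Fin m ⊕ Fin m) ℂ)
    (hRJreal : R = Matrix.fromBlocks rp rq (rq.map (starRingEnd ℂ)) (rp.map (starRingEnd ℂ)))
    (hRsymp : Rᴴ * S * R = S) :
    (∃ hd : Matrix (Fin m) (Fin m) ℂ, hd.PosDef ∧
        R⁻¹ * B * R = Matrix.fromBlocks hd 0 0 (-(hd.map (starRingEnd ℂ)))) ↔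
      sgnB = R * S * R⁻¹ :=
  diagonalizes_iff_sgn_eq_general h g S A B sgnB hS hA hApos hB hsgn_comm hsgn_sq hsgn_pos rp rq R
    hRJreal hRsymp
end
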